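/- Define x2 = a5 + x1, x3 = a3/a5, x4 = (-a3 + a4·a5 + a5^2·x1 + a5·x1^2)/a5, x5 = (a3^2 - a3·a4·a5 + a2·a5^2 + a5^2·x9)/a5^2, x6 = (a1·a5^2 + a3^2·x1 - a3·a4·a5·x1 + a2·a5^2·x1 + a5^2·x8 + a5^3·x9 + a5^2·x1·x9)/a5^2, x7 = (-a0·a5 + a5·x1·x8 + a3·x9 - a4·a5·x9)/a5, where a5 ≠ 0 and x1, x8, x9 are arbitrary reals. Then the 6×6 matrix X with rows (x1, 1, 0, 0, 0, 0), (-x4, -x2, 1, 0, 0, 0), (0, 0, 0, 1, 0, 0), (0, 0, 0, 0, 1, 0), (-x6, -x5, 0, 0, 0, 1), (x7, x8, x9, 0, -x3, 0) has characteristic polynomial t^6 + a5·t^5 + a4·t^4 + a3·t^3 + a2·t^2 + a1·t + a0. -/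

import Mathlib

open Polynomial Matrix
open scoped Classical

def hasSign {m : Type*} (P M : Matrix m m ℝ) : Prop :=
  ∀ i j, Real.sign (M i j) = P i j

def patT : Matrix (Fin 6) (Fin 6) ℝ :=
  !![1,1,0,0,0,0; -1,-1,1,0,0,0; 0,0,0,1,0,0; 0,0,0,0,1,0;
     -1,-1,0,0,0,1; 1,1,1,0,-1,0]

def patT' : Matrix (Fin 6) (Fin 6) ℝ :=
  !![1,1,0,0,0,0; -1,-1,1,0,0,0; 1,0,0,1,0,0; 0,0,0,0,1,0;
     -1,-1,0,0,0,1; 1,1,1,0,-1,0]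
def matX (x1 x2 x3 x4 x5 x6 x7 x8 x9 : ℝ) : Matrix (Fin 6) (Fin 6) ℝ :=
  !![x1, 1, 0, 0, 0, 0;
     -x4, -x2, 1, 0, 0, 0;
     0, 0, 0, 1, 0, 0;
     0, 0, 0, 0, 1, 0;
     -x6, -x5, 0, 0, 0, 1;
     x7, x8, x9, 0, -x3, 0]

/-! Cofactor expansion of `det (scalar t - matX …)` gives the coefficients of the characteristic
polynomial as polynomials in `x1, …, x9`. Read from the top coefficient down, they form a
triangular system in `x2, x3, x4, x5, x6, x7`, solved by the stated values because `a5 ≠ 0`. -/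

lemma scalar_sub_matX (t x1 x2 x3 x4 x5 x6 x7 x8 x9 : ℝ) :
    scalar (Fin 6) t - matX x1 x2 x3 x4 x5 x6 x7 x8 x9 =
      !![t - x1, -1, 0, 0, 0, 0;
         x4, t + x2, -1, 0, 0, 0;
         0, 0, t, -1, 0, 0;
         0, 0, 0, t, -1, 0;
         x6, x5, 0, 0, t, -1;
         -x7, -x8, -x9, 0, x3, t] := by
  ext i j
  fin_cases i <;> fin_cases j <;> simp [matX]

lemma charpoly_matX (x1 x2 x3 x4 x5 x6 x7 x8 x9 : ℝ) :
    (matX x1 x2 x3 x4 x5 x6 x7 x8 x9).charpoly =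
      X ^ 6 + C (x2 - x1) * X ^ 5 + C (x4 + x3 - x1 * x2) * X ^ 4 + C (x3 * (x2 - x1)) * X ^ 3 +
        C (x5 + x3 * x4 - x9 - x1 * x2 * x3) * X ^ 2 +
        C (x6 - x8 + x1 * x9 - x2 * x9 - x1 * x5) * X + C (x1 * x8 + x1 * x2 * x9 - x4 * x9 - x7) := by
  refine Polynomial.funext fun t => ?_
  rw [eval_charpoly, scalar_sub_matX]
  simp [det_succ_row_zero, Fin.sum_univ_succ, Fin.succAbove]
  ring

theorem stmt_6 (a0 a1 a2 a3 a4 a5 x1 x8 x9 : ℝ) (ha5 : a5 ≠ 0)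
    (x2 x3 x4 x5 x6 x7 : ℝ)
    (hx2 : x2 = a5 + x1)
    (hx3 : x3 = a3 / a5)
    (hx4 : x4 = (-a3 + a4 * a5 + a5 ^ 2 * x1 + a5 * x1 ^ 2) / a5)
    (hx5 : x5 = (a3 ^ 2 - a3 * a4 * a5 + a2 * a5 ^ 2 + a5 ^ 2 * x9) / a5 ^ 2)
    (hx6 : x6 = (a1 * a5 ^ 2 + a3 ^ 2 * x1 - a3 * a4 * a5 * x1 + a2 * a5 ^ 2 * x1 +
        a5 ^ 2 * x8 + a5 ^ 3 * x9 + a5 ^ 2 * x1 * x9) / a5 ^ 2)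
    (hx7 : x7 = (-(a0 * a5) + a5 * x1 * x8 + a3 * x9 - a4 * a5 * x9) / a5) :
    (matX x1 x2 x3 x4 x5 x6 x7 x8 x9).charpoly =
      X ^ 6 + C a5 * X ^ 5 + C a4 * X ^ 4 + C a3 * X ^ 3 +
        C a2 * X ^ 2 + C a1 * X + C a0 := by
  have c5 : x2 - x1 = a5 := by rw [hx2]; ring
  have c4 : x4 + x3 - x1 * x2 = a4 := by rw [hx2, hx3, hx4]; field_simp; ring
  have c3 : x3 * (x2 - x1) = a3 := by rw [c5, hx3]; field_simp
  have c2 : x5 + x3 * x4 - x9 - x1 * x2 * x3 = a2 := by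
    rw [hx2, hx3, hx4, hx5]; field_simp; ring
  have c1 : x6 - x8 + x1 * x9 - x2 * x9 - x1 * x5 = a1 := by
    rw [hx2, hx5, hx6]; field_simp; ring
  have c0 : x1 * x8 + x1 * x2 * x9 - x4 * x9 - x7 = a0 := by
    rw [hx2, hx4, hx7]; field_simp; ring
  rw [charpoly_matX, c3, c5, c4, c2, c1, c0]
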